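/- Let C be a 2-identifying code in the hexagonal grid G_H and c = (0,0) ∈ C with neighbor (0,1) ∈ C and (−1,0), (1,0) ∉ C. Suppose moreover (−3,0) ∈ C and (1,−1) ∈ C. Then s_2(C;c) ≤ 15/4. -/

import Mathlib

def hexGraph : SimpleGraph (ℤ × ℤ) where
  Adj u v := (u.2 = v.2 ∧ (u.1 = v.1 + 1 ∨ u.1 = v.1 - 1)) ∨
    (u.1 = v.1 ∧ (((u.1 + u.2) % 2 = 0 ∧ u.2 = v.2 - 1) ∨ ((u.1 + u.2) % 2 ≠ 0 ∧ u.2 = v.2 + 1)))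
  symm := ⟨by rintro ⟨a, b⟩ ⟨c, d⟩ h; dsimp only at *; omega⟩
  loopless := ⟨by rintro ⟨a, b⟩ h; dsimp only at h; omega⟩

def hexBall (r : ℕ) (u : ℤ × ℤ) : Set (ℤ × ℤ) := {x | hexGraph.dist u x ≤ r}

def I2 (C : Set (ℤ × ℤ)) (u : ℤ × ℤ) : Set (ℤ × ℤ) := hexBall 2 u ∩ C

def isIdentifying2 (C : Set (ℤ × ℤ)) : Prop :=
  ∀ u : ℤ × ℤ, (I2 C u).Nonempty ∧ ∀ v : ℤ × ℤ, u ≠ v → I2 C u ≠ I2 C v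

noncomputable def share2 (C : Set (ℤ × ℤ)) (c : ℤ × ℤ) : ℝ :=
  ∑' u : (hexBall 2 c), 1 / ((I2 C ↑u).ncard : ℝ)

def Q (n : ℕ) : Set (ℤ × ℤ) := {p | |p.1| ≤ (n : ℤ) ∧ |p.2| ≤ (n : ℤ)}

noncomputable def density (C : Set (ℤ × ℤ)) : ℝ :=
  Filter.limsup (fun n : ℕ => ((C ∩ Q n).ncard : ℝ) / ((Q n).ncard : ℝ)) Filter.atTop

/-! Let `D = {(0,0), (0,1), (-3,0), (1,-1)} ⊆ C`. The ten vertices of `B₂((0,0))` fall into five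
classes on which `I₂(D; u) = X` is constant. Since `C` is identifying, `u ↦ I₂(C; u)` is injective,
so in a class of size `k` at most one `u` has `I₂(C; u) = X` and all others have at least `|X| + 1`
codewords: the class contributes at most `1/|X| + (k - 1)/(|X| + 1)` to the share. The classes give
`1/2 + 1/3 + 7/6 + 7/6 + 7/12 = 15/4`. -/

open Finset

theorem SimpleGraph.Reachable.dist_le_two_iff {V : Type*} {G : SimpleGraph V} {u v : V}
    (h : G.Reachable u v) :
    G.dist u v ≤ 2 ↔ u = v ∨ G.Adj u v ∨ ∃ w, G.Adj u w ∧ G.Adj w v := by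
  constructor
  · obtain ⟨p, hp⟩ := h.exists_walk_length_eq_dist
    rw [← hp]
    match p with
    | .nil => exact fun _ => .inl rfl
    | .cons h .nil => exact fun _ => .inr (.inl h)
    | .cons h (.cons h' .nil) => exact fun _ => .inr (.inr ⟨_, h, h'⟩)
    | .cons _ (.cons _ (.cons _ _)) => simp
  · rintro (rfl | h | ⟨w, h₁, h₂⟩)
    · simp
    · exact (SimpleGraph.dist_le (.cons h .nil)).trans (by simp)
    · exact SimpleGraph.dist_le (.cons h₁ (.cons h₂ .nil))

theorem hexGraph_adj_iff {a b c d : ℤ} : hexGraph.Adj (a, b) (c, d) ↔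
    (b = d ∧ (a = c + 1 ∨ a = c - 1)) ∨
      (a = c ∧ (((a + b) % 2 = 0 ∧ b = d - 1) ∨ ((a + b) % 2 ≠ 0 ∧ b = d + 1))) :=
  Iff.rfl

theorem hexGraph_reachable_right (i j : ℤ) : hexGraph.Reachable (i, j) (i + 1, j) :=
  SimpleGraph.Adj.reachable (hexGraph_adj_iff.2 (by omega))

theorem hexGraph_reachable_up (i j : ℤ) : hexGraph.Reachable (i, j) (i, j + 1) := by
  rcases Int.emod_two_eq (i + j) with h | h
  · exact SimpleGraph.Adj.reachable (hexGraph_adj_iff.2 (by omega))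
  · -- around the hexagon: right, up, left
    exact ((hexGraph_reachable_right i j).trans
      (SimpleGraph.Adj.reachable (hexGraph_adj_iff.2 (by omega)))).trans
      (hexGraph_reachable_right i (j + 1)).symm

theorem hexGraph_preconnected : hexGraph.Preconnected := by
  suffices h : ∀ a b : ℤ, hexGraph.Reachable (0, 0) (a, b) from
    fun u v => (h u.1 u.2).symm.trans (h v.1 v.2)
  intro a b
  have horizontal : hexGraph.Reachable (0, 0) (a, 0) := by
    induction a using Int.induction_on with
    | zero => rfl
    | succ k ih => exact ih.trans (hexGraph_reachable_right k 0)
    | pred k ih => exact ih.trans (by simpa using (hexGraph_reachable_right (-k - 1) 0).symm)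
  induction b using Int.induction_on with
  | zero => exact horizontal
  | succ k ih => exact ih.trans (hexGraph_reachable_up a k)
  | pred k ih => exact ih.trans (by simpa using (hexGraph_reachable_up a (-k - 1)).symm)

/-- `1 - 2 * ((u.1 + u.2) % 2) = ±1` is the direction of the vertical edge at `u`. -/
theorem mem_hexBall_two_iff {u x : ℤ × ℤ} : x ∈ hexBall 2 u ↔
    (x.2 = u.2 ∧ -2 ≤ x.1 - u.1 ∧ x.1 - u.1 ≤ 2) ∨
      (x.2 = u.2 + (1 - 2 * ((u.1 + u.2) % 2)) ∧ -1 ≤ x.1 - u.1 ∧ x.1 - u.1 ≤ 1) ∨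
      (x.2 = u.2 - (1 - 2 * ((u.1 + u.2) % 2)) ∧ (x.1 = u.1 + 1 ∨ x.1 = u.1 - 1)) := by
  obtain ⟨a, b⟩ := u
  obtain ⟨c, d⟩ := x
  rw [hexBall, Set.mem_ofPred_eq, (hexGraph_preconnected _ _).dist_le_two_iff]
  dsimp only
  constructor
  · rintro (h | h | ⟨⟨e, f⟩, h₁, h₂⟩)
    · simp only [Prod.mk.injEq] at h; omega
    · rw [hexGraph_adj_iff] at h; omega
    · rw [hexGraph_adj_iff] at h₁ h₂; omega
  · intro h
    -- a path of length two leaves `(a, b)` horizontally, or vertically towards the row `d`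
    have hc : c = a - 2 ∨ c = a - 1 ∨ c = a ∨ c = a + 1 ∨ c = a + 2 := by omega
    rcases h with h | h | h <;> rcases hc with hc | hc | hc | hc | hc <;>
    first
      | (exfalso; omega)
      | exact .inl (Prod.ext (by omega) (by omega))
      | exact .inr (.inl (hexGraph_adj_iff.2 (by omega)))
      | exact .inr (.inr ⟨(a + 1, b), hexGraph_adj_iff.2 (by omega), hexGraph_adj_iff.2 (by omega)⟩)
      | exact .inr (.inr ⟨(a - 1, b), hexGraph_adj_iff.2 (by omega), hexGraph_adj_iff.2 (by omega)⟩)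
      | exact .inr (.inr ⟨(a, d), hexGraph_adj_iff.2 (by omega), hexGraph_adj_iff.2 (by omega)⟩)

theorem finite_hexBall_two (u : ℤ × ℤ) : (hexBall 2 u).Finite := by
  refine (Set.finite_Icc (u.1 - 2, u.2 - 1) (u.1 + 2, u.2 + 1)).subset fun x hx => ?_
  rw [mem_hexBall_two_iff] at hx
  simp only [Set.mem_Icc, Prod.le_def]
  omega

theorem hexBall_two_zero_subset : hexBall 2 (0, 0) ⊆ ↑({(-2, 0)} ∪ {(-1, 0)} ∪
    {(-1, 1), (0, 1), (1, 1)} ∪ {(-1, -1), (1, -1), (2, 0)} ∪ {(0, 0), (1, 0)} : Finset (ℤ × ℤ)) :=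
  fun ⟨c, d⟩ hx => by
    rw [mem_hexBall_two_iff] at hx
    dsimp only at hx
    obtain ⟨hc₁, hc₂, hd₁, hd₂⟩ : -2 ≤ c ∧ c ≤ 2 ∧ -1 ≤ d ∧ d ≤ 1 := by omega
    rw [mem_coe]
    interval_cases c <;> interval_cases d <;> first | decide | omega

theorem finite_I2 (C : Set (ℤ × ℤ)) (u : ℤ × ℤ) : (I2 C u).Finite :=
  (finite_hexBall_two u).inter_of_left C

theorem isIdentifying2.injective {C : Set (ℤ × ℤ)} (hC : isIdentifying2 C) :
    Function.Injective (I2 C) := fun u v h => by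
  by_contra huv
  exact (hC u).2 v huv h

theorem share2_le_sum {S : Finset (ℤ × ℤ)} (C : Set (ℤ × ℤ)) {c : ℤ × ℤ}
    (hS : hexBall 2 c ⊆ S) : share2 C c ≤ ∑ u ∈ S, 1 / ((I2 C u).ncard : ℝ) := by
  rw [share2, ← (finite_hexBall_two c).coe_toFinset,
    Finset.tsum_subtype' _ fun u => 1 / ((I2 C u).ncard : ℝ)]
  exact sum_le_sum_of_subset_of_nonneg (by simpa using hS) fun _ _ _ => by positivity

theorem sum_one_div_ncard_le_of_injOn {ι α : Type*} {f : ι → Set α} {G : Finset ι} {X : Finset α}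
    (hf : Set.InjOn f G) (hfin : ∀ i ∈ G, (f i).Finite) (hX : X.Nonempty)
    (hGX : ∀ i ∈ G, ↑X ⊆ f i) :
    ∑ i ∈ G, 1 / ((f i).ncard : ℝ) ≤ 1 / #X + (#G - 1) / (#X + 1) := by
  classical
  have hXpos : (0 : ℝ) < #X := by exact_mod_cast hX.card_pos
  have hle : ∀ i ∈ G, 1 / ((f i).ncard : ℝ) ≤ 1 / #X := fun i hi => by
    gcongr
    simpa using Set.ncard_le_ncard (hGX i hi) (hfin i hi)
  have hlt : ∀ i ∈ G, f i ≠ X → 1 / ((f i).ncard : ℝ) ≤ 1 / (#X + 1) := fun i hi hne => by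
    have := Set.ncard_lt_ncard ((hGX i hi).ssubset_of_ne hne.symm) (hfin i hi)
    rw [Set.ncard_coe_finset] at this
    gcongr
    exact_mod_cast this
  by_cases h : ∃ i₀ ∈ G, f i₀ = X
  · obtain ⟨i₀, hi₀, hfi₀⟩ := h
    have hG : (1 : ℝ) ≤ #G := by exact_mod_cast card_pos.2 ⟨i₀, hi₀⟩
    rw [← add_sum_erase G _ hi₀]
    gcongr ?_ + ?_
    · exact hle i₀ hi₀
    · calc ∑ i ∈ G.erase i₀, 1 / ((f i).ncard : ℝ)
          ≤ ∑ i ∈ G.erase i₀, 1 / ((#X : ℝ) + 1) := by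
            refine sum_le_sum fun i hi => hlt i (mem_of_mem_erase hi) fun hfi => ?_
            exact ne_of_mem_erase hi (hf (mem_of_mem_erase hi) hi₀ (hfi.trans hfi₀.symm))
        _ = (#G - 1) / (#X + 1) := by
            rw [sum_const, card_erase_of_mem hi₀, nsmul_eq_mul,
              Nat.cast_pred (card_pos.2 ⟨i₀, hi₀⟩)]
            ring
  · push Not at h
    calc ∑ i ∈ G, 1 / ((f i).ncard : ℝ) ≤ ∑ i ∈ G, 1 / ((#X : ℝ) + 1) :=
          sum_le_sum fun i hi => hlt i hi (h i hi)
      _ = 1 / (#X + 1) + (#G - 1) / (#X + 1) := by rw [sum_const, nsmul_eq_mul]; ring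
      _ ≤ 1 / #X + (#G - 1) / (#X + 1) := by gcongr; linarith

theorem stmt17_general (C : Set (ℤ × ℤ)) (hC : isIdentifying2 C)
    (h00 : ((0 : ℤ), (0 : ℤ)) ∈ C) (h01 : ((0 : ℤ), (1 : ℤ)) ∈ C)
    (hm30 : ((-3 : ℤ), (0 : ℤ)) ∈ C) (h1m1 : ((1 : ℤ), (-1 : ℤ)) ∈ C) :
    share2 C ((0 : ℤ), (0 : ℤ)) ≤ 15 / 4 := by
  have hD : ∀ x ∈ ({(0, 0), (0, 1), (-3, 0), (1, -1)} : Finset (ℤ × ℤ)), x ∈ C := by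
    simp only [mem_insert, mem_singleton, forall_eq_or_imp, forall_eq]
    exact ⟨h00, h01, hm30, h1m1⟩
  have group : ∀ G X : Finset (ℤ × ℤ), X ⊆ {(0, 0), (0, 1), (-3, 0), (1, -1)} → X.Nonempty →
      (∀ u ∈ G, ∀ x ∈ X, x ∈ hexBall 2 u) →
      ∑ u ∈ G, 1 / ((I2 C u).ncard : ℝ) ≤ 1 / #X + (#G - 1) / (#X + 1) :=
    fun G X hXD hX hball =>
      sum_one_div_ncard_le_of_injOn hC.injective.injOn (fun u _ => finite_I2 C u) hX
        fun u hu x hx => ⟨hball u hu x hx, hD x (hXD hx)⟩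
  have hS := share2_le_sum C hexBall_two_zero_subset
  rw [sum_union (by decide), sum_union (by decide), sum_union (by decide),
    sum_union (by decide)] at hS
  have h₁ := group {(-2, 0)} {(0, 0), (-3, 0)} (by decide) (by simp)
    (by simp only [mem_hexBall_two_iff]; decide)
  have h₂ := group {(-1, 0)} {(0, 0), (0, 1), (-3, 0)} (by decide) (by simp)
    (by simp only [mem_hexBall_two_iff]; decide)
  have h₃ := group {(-1, 1), (0, 1), (1, 1)} {(0, 0), (0, 1)} (by decide) (by simp)
    (by simp only [mem_hexBall_two_iff]; decide)
  have h₄ := group {(-1, -1), (1, -1), (2, 0)} {(0, 0), (1, -1)} (by decide) (by simp)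
    (by simp only [mem_hexBall_two_iff]; decide)
  have h₅ := group {(0, 0), (1, 0)} {(0, 0), (0, 1), (1, -1)} (by decide) (by simp)
    (by simp only [mem_hexBall_two_iff]; decide)
  norm_num at hS h₁ h₂ h₃ h₄ h₅
  linarith

theorem stmt17 (C : Set (ℤ × ℤ)) (hC : isIdentifying2 C)
    (h00 : ((0 : ℤ), (0 : ℤ)) ∈ C) (h01 : ((0 : ℤ), (1 : ℤ)) ∈ C)
    (hm10 : ((-1 : ℤ), (0 : ℤ)) ∉ C) (h10 : ((1 : ℤ), (0 : ℤ)) ∉ C)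
    (hm30 : ((-3 : ℤ), (0 : ℤ)) ∈ C) (h1m1 : ((1 : ℤ), (-1 : ℤ)) ∈ C) :
    share2 C ((0 : ℤ), (0 : ℤ)) ≤ 15 / 4 :=
  stmt17_general C hC h00 h01 hm30 h1m1
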